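/- arXiv:1706.00350 — 2 statements merged into one kernel-verified Lean document; each statement's English description precedes it below -/
import Mathlib

section
/- Let N, M, D be integers with 2 ≤ M < N and D ≥ 1. Then the unique maximizer τ* of P_D on [0,1] lies in the open interval (1-((N-1)/(N-1+D))^{1/D}, 1). -/
/-!
Write `P = f · S` with `f τ = 1 - (1 - τ)^D` and `S τ = ℙ(Bin(N-1, τ) < M)`, a sum of Bernstein
polynomials `b_{N-1,ν}`; the sum telescopes under differentiation to `S' = -(N-1) b_{N-2,M-1}`.
Since `P` vanishes at `0` and `1` and is positive in between, a maximiser `τ` is interior and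
`P' τ = 0`. If `τ ≤ 1 - β^{1/D}` with `β = (N-1)/(N-1+D)`, then `(1-τ)^D ≥ β`; by Bernoulli this
forces `(N-1) τ ≤ 1`, whence `b_{N-2,M-1} τ ≤ b_{N-1,M-1} τ < S τ`. Together with `f τ ≤ 1 - β`
this gives `P' τ ≥ D β (S τ - b_{N-2,M-1} τ) > 0`, a contradiction.
-/

open Finset Set

noncomputable def P (N M D : ℕ) (τ : ℝ) : ℝ :=
  (1 - (1 - τ)^D) * ∑ i ∈ range M, ((N-1).choose i : ℝ) * τ^i * (1-τ)^(N-1-i)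

open Polynomial

namespace bernsteinPolynomial

theorem derivative_sum_range_succ {R : Type*} [CommRing R] (n m : ℕ) :
    derivative (∑ ν ∈ range (m + 1), bernsteinPolynomial R (n + 1) ν) =
      -(n + 1 : R[X]) * bernsteinPolynomial R n m := by
  induction m with
  | zero => simp [derivative_zero]
  | succ m ih =>
    rw [sum_range_succ, derivative_add, ih, derivative_succ_aux]
    ring

theorem eval_nonneg {n ν : ℕ} {τ : ℝ} (h0 : 0 ≤ τ) (h1 : τ ≤ 1) :
    0 ≤ (bernsteinPolynomial ℝ n ν).eval τ := by
  simp only [bernsteinPolynomial, eval_mul, eval_pow, eval_sub, eval_one, eval_X, eval_natCast]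
  have h1τ : 0 ≤ 1 - τ := by linarith
  positivity

theorem eval_le_eval_succ {n m : ℕ} {τ : ℝ} (h0 : 0 ≤ τ) (h1 : τ ≤ 1) (h : (n + 1) * τ ≤ m) :
    (bernsteinPolynomial ℝ n m).eval τ ≤ (bernsteinPolynomial ℝ (n + 1) m).eval τ := by
  rcases lt_or_ge n m with hnm | hmn
  · rw [eq_zero_of_lt ℝ hnm, eval_zero]
    exact eval_nonneg h0 h1
  have hchoose : (n.choose m : ℝ) * (n + 1) = (n + 1).choose m * ((n - m : ℕ) + 1) := by
    have := Nat.choose_mul_succ_eq n m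
    rw [Nat.sub_add_comm hmn] at this
    exact_mod_cast this
  have hcoeff : ((n - m : ℕ) : ℝ) + 1 ≤ (n + 1) * (1 - τ) := by
    push_cast [hmn]
    linarith
  simp only [bernsteinPolynomial, eval_mul, eval_pow, eval_sub, eval_one, eval_X, eval_natCast,
    Nat.sub_add_comm hmn, pow_succ]
  have h1τ : 0 ≤ 1 - τ := by linarith
  refine le_of_mul_le_mul_right ?_ (by positivity : (0 : ℝ) < n + 1)
  calc (n.choose m : ℝ) * τ ^ m * (1 - τ) ^ (n - m) * (n + 1)
      = (n + 1).choose m * τ ^ m * (1 - τ) ^ (n - m) * ((n - m : ℕ) + 1) := by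
        linear_combination τ ^ m * (1 - τ) ^ (n - m) * hchoose
    _ ≤ (n + 1).choose m * τ ^ m * (1 - τ) ^ (n - m) * ((n + 1) * (1 - τ)) := by
        gcongr
    _ = _ := by ring

theorem one_sub_pow_add_eval_le_eval_sum {n m : ℕ} (hm : m ≠ 0) {τ : ℝ} (h0 : 0 ≤ τ) (h1 : τ ≤ 1) :
    (1 - τ) ^ n + (bernsteinPolynomial ℝ n m).eval τ ≤
      (∑ ν ∈ range (m + 1), bernsteinPolynomial ℝ n ν).eval τ := by
  have hsub : ({0, m} : Finset ℕ) ⊆ Finset.range (m + 1) := by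
    intro ν; simp only [Finset.mem_insert, Finset.mem_singleton, Finset.mem_range]; omega
  calc (1 - τ) ^ n + (bernsteinPolynomial ℝ n m).eval τ
      = ∑ ν ∈ {0, m}, (bernsteinPolynomial ℝ n ν).eval τ := by
        rw [sum_pair hm.symm]; simp [bernsteinPolynomial]
    _ ≤ ∑ ν ∈ range (m + 1), (bernsteinPolynomial ℝ n ν).eval τ :=
        sum_le_sum_of_subset_of_nonneg hsub fun ν _ _ => eval_nonneg h0 h1
    _ = _ := (eval_finsetSum _ _ _).symm

end bernsteinPolynomial

theorem one_sub_inv_pow_le_div {c : ℝ} (hc : 1 ≤ c) (D : ℕ) : (1 - c⁻¹) ^ D ≤ c / (c + D) := by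
  have hc0 : 0 < c := by linarith
  have hinv : c⁻¹ ≤ 1 := inv_le_one_of_one_le₀ hc
  rw [le_div_iff₀ (by positivity)]
  calc (1 - c⁻¹) ^ D * (c + D) = c * ((1 - c⁻¹) ^ D * (1 + D * c⁻¹)) := by field_simp
    _ ≤ c * ((1 - c⁻¹) ^ D * (1 + c⁻¹) ^ D) := by
        gcongr
        exact one_add_mul_le_pow (by linarith [inv_pos.2 hc0]) D
    _ = c * (1 - c⁻¹ ^ 2) ^ D := by rw [← mul_pow]; ring
    _ ≤ c := mul_le_of_le_one_right hc0.le
        (pow_le_one₀ (by nlinarith [inv_pos.2 hc0]) (by linarith [sq_nonneg c⁻¹]))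

theorem mul_le_one_of_div_le_one_sub_pow {c τ : ℝ} {D : ℕ} (hc : 1 ≤ c) (hD : D ≠ 0) (hτ : τ ≤ 1)
    (h : c / (c + D) ≤ (1 - τ) ^ D) : c * τ ≤ 1 := by
  by_contra! hlt
  have hinv : c⁻¹ < τ := by rwa [inv_lt_iff_one_lt_mul₀ (by linarith), mul_comm]
  have hpow := pow_lt_pow_left₀ (by linarith : 1 - τ < 1 - c⁻¹) (by linarith) hD
  linarith [one_sub_inv_pow_le_div hc D]

theorem P_eq_mul_eval_sum_bernsteinPolynomial (n M D : ℕ) (τ : ℝ) :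
    P (n + 2) M D τ =
      (1 - (1 - τ) ^ D) * (∑ ν ∈ range M, bernsteinPolynomial ℝ (n + 1) ν).eval τ := by
  simp [P, bernsteinPolynomial, eval_finsetSum]

theorem P_zero (N M D : ℕ) : P N M D 0 = 0 := by
  simp [P]

theorem P_one {n m : ℕ} (hmn : m ≤ n) (D : ℕ) : P (n + 2) (m + 1) D 1 = 0 := by
  rw [P_eq_mul_eval_sum_bernsteinPolynomial, eval_finsetSum, sum_eq_zero, mul_zero]
  intro ν hν
  rw [bernsteinPolynomial.eval_at_1, if_neg (by simp at hν; omega)]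

theorem P_pos {n m D : ℕ} (hm : m ≠ 0) (hD : D ≠ 0) {τ : ℝ} (h0 : 0 < τ) (h1 : τ < 1) :
    0 < P (n + 2) (m + 1) D τ := by
  rw [P_eq_mul_eval_sum_bernsteinPolynomial]
  have hS := bernsteinPolynomial.one_sub_pow_add_eval_le_eval_sum (n := n + 1) hm h0.le h1.le
  have hb := bernsteinPolynomial.eval_nonneg (n := n + 1) (ν := m) h0.le h1.le
  have hS0 : 0 < (1 - τ) ^ (n + 1) := pow_pos (by linarith) _
  have hf : (1 - τ) ^ D < 1 := pow_lt_one₀ (by linarith) (by linarith) hD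
  exact mul_pos (by linarith) (by linarith)

theorem hasDerivAt_P (n m D : ℕ) (τ : ℝ) :
    HasDerivAt (P (n + 2) (m + 1) D)
      (D * (1 - τ) ^ (D - 1) * (∑ ν ∈ range (m + 1), bernsteinPolynomial ℝ (n + 1) ν).eval τ
        - (1 - (1 - τ) ^ D) * ((n + 1) * (bernsteinPolynomial ℝ n m).eval τ)) τ := by
  have hf : HasDerivAt (fun x : ℝ => 1 - (1 - x) ^ D) (D * (1 - τ) ^ (D - 1)) τ := by
    simpa using (((hasDerivAt_id τ).const_sub 1).pow D).const_sub 1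
  have hS := (∑ ν ∈ range (m + 1), bernsteinPolynomial ℝ (n + 1) ν).hasDerivAt τ
  rw [bernsteinPolynomial.derivative_sum_range_succ] at hS
  rw [funext (P_eq_mul_eval_sum_bernsteinPolynomial n (m + 1) D)]
  refine (hf.mul hS).congr_deriv ?_
  rw [eval_mul, eval_neg, eval_add, eval_natCast, eval_one]
  ring

theorem deriv_P_pos {n m D : ℕ} (hm : m ≠ 0) (hD : D ≠ 0) {τ : ℝ} (h0 : 0 ≤ τ) (h1 : τ < 1)
    (h : (n + 1 : ℝ) / (n + 1 + D) ≤ (1 - τ) ^ D) :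
    0 < deriv (P (n + 2) (m + 1) D) τ := by
  rw [(hasDerivAt_P n m D τ).deriv, sub_pos]
  set S := (∑ ν ∈ range (m + 1), bernsteinPolynomial ℝ (n + 1) ν).eval τ
  set b := (bernsteinPolynomial ℝ n m).eval τ
  set β : ℝ := (n + 1) / (n + 1 + D)
  have hcτ : (n + 1) * τ ≤ 1 := mul_le_one_of_div_le_one_sub_pow (by linarith) hD h1.le h
  have hb0 : 0 ≤ b := bernsteinPolynomial.eval_nonneg h0 h1.le
  have hbS : b < S := by
    have hS := bernsteinPolynomial.one_sub_pow_add_eval_le_eval_sum (n := n + 1) hm h0 h1.le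
    have hb := bernsteinPolynomial.eval_le_eval_succ (m := m) h0 h1.le
      (hcτ.trans (by exact_mod_cast Nat.one_le_iff_ne_zero.2 hm))
    have h0S : 0 < (1 - τ) ^ (n + 1) := pow_pos (by linarith) _
    linarith
  have hS0 : 0 ≤ S := hb0.trans hbS.le
  have hpow : (1 - τ) ^ D ≤ (1 - τ) ^ (D - 1) :=
    pow_le_pow_of_le_one (by linarith) (by linarith) (Nat.sub_le D 1)
  have hβ : (1 - β) * (n + 1) = D * β := by
    simp only [β]; field_simp; ring
  have hD0 : (0 : ℝ) < D := by exact_mod_cast Nat.pos_of_ne_zero hD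
  have hβ0 : 0 < β := by positivity
  calc (1 - (1 - τ) ^ D) * ((n + 1) * b) ≤ (1 - β) * (n + 1) * b := by
        rw [mul_assoc]; gcongr
    _ = D * β * b := by rw [hβ]
    _ < D * β * S := by gcongr
    _ ≤ D * (1 - τ) ^ (D - 1) * S := by gcongr; exact h.trans hpow

theorem stmt15 (N M D : ℕ) (hM : 2 ≤ M) (hMN : M < N) (hD : 1 ≤ D) :
    ∀ τs ∈ Icc (0:ℝ) 1, (∀ τ ∈ Icc (0:ℝ) 1, P N M D τ ≤ P N M D τs) →
      τs ∈ Ioo (1 - (((N:ℝ)-1)/((N:ℝ)-1+(D:ℝ))) ^ ((1:ℝ)/(D:ℝ))) 1 := by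
  intro τs hτs hmax
  obtain ⟨n, rfl⟩ : ∃ n, N = n + 2 := ⟨N - 2, by omega⟩
  obtain ⟨m, rfl⟩ : ∃ m, M = m + 1 := ⟨M - 1, by omega⟩
  have hm : m ≠ 0 := by omega
  have hD0 : D ≠ 0 := by omega
  have hpos : 0 < P (n + 2) (m + 1) D τs :=
    (P_pos hm hD0 (by norm_num) (by norm_num : (1 / 2 : ℝ) < 1)).trans_le
      (hmax _ ⟨by norm_num, by norm_num⟩)
  have hτ0 : 0 < τs := hτs.1.lt_of_ne (by rintro rfl; simp [P_zero] at hpos)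
  have hτ1 : τs < 1 := hτs.2.lt_of_ne (by rintro rfl; simp [P_one (by omega : m ≤ n)] at hpos)
  refine ⟨?_, hτ1⟩
  by_contra! hle
  have hβ : (n + 1 : ℝ) / (n + 1 + D) ≤ (1 - τs) ^ D := by
    have hroot : ((n + 1 : ℝ) / (n + 1 + D)) ^ (D : ℝ)⁻¹ ≤ 1 - τs := by
      push_cast at hle
      rw [one_div, add_sub_assoc, show (2 : ℝ) - 1 = 1 by norm_num] at hle
      linarith
    rwa [Real.rpow_inv_le_iff_of_pos (by positivity) (by linarith) (by positivity),
      Real.rpow_natCast] at hroot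
  have hloc : IsLocalMax (P (n + 2) (m + 1) D) τs :=
    Filter.eventually_of_mem (Icc_mem_nhds hτ0 hτ1) hmax
  exact (deriv_P_pos hm hD0 hτ0.le hτ1 hβ).ne' hloc.deriv_eq_zero
end

section
/- Let N, M, D be integers with 2 ≤ M < N and D ≥ 1, and define g(x) = x(H_1(x)+1)/(H_2(x)+1) for x ∈ (0,1). Then g'(x) > 0 for every x ∈ (0,1). -/
open Finset Set

noncomputable def f1 (N M : ℕ) (τ : ℝ) : ℝ :=
  ∑ i ∈ range M, ((N-1).choose i : ℝ) * τ^i * (1-τ)^(N-1-i)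

noncomputable def f2 (N M : ℕ) (τ : ℝ) : ℝ :=
  ∑ i ∈ range M, (i : ℝ) * ((N-1).choose i : ℝ) * τ^i * (1-τ)^(N-1-i)

noncomputable def H1 (N M : ℕ) (τ : ℝ) : ℝ := f2 N M τ / f1 N M τ

noncomputable def H2 (N D : ℕ) (τ : ℝ) : ℝ :=
  τ * ((N:ℝ) + (D:ℝ) - 1 - (D:ℝ) / (1 - (1-τ)^D))

noncomputable def g (N M D : ℕ) (x : ℝ) : ℝ :=
  x * (H1 N M x + 1) / (H2 N D x + 1)

/-!
On `(0, 1)` write `g = (H1 + 1) / Q` with `Q x = (H2 x + 1) / x`.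

With the weights `w i = C(N-1, i) x^i (1-x)^(N-1-i)`, the identity
`x (1 - x) w' i = (i - (N-1) x) w i` gives `x (1 - x) H1' = Σ i² w / Σ w - (Σ i w / Σ w)²`,
the variance of `i` under the weights, which is positive because `w 0, w 1 > 0` (here `M ≥ 2`).

On the other side `x² Q' = x² D² (1-x)^(D-1) / (1 - (1-x)^D)² - 1 ≤ 0`, because
`1 - (1-x)^D = x Σ_{k<D} (1-x)^k` and, by Cauchy–Schwarz, `D² t^(D-1) ≤ (Σ_{k<D} t^k)²`.
Hence `g' = (H1' Q - (H1 + 1) Q') / Q² > 0`.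
-/

noncomputable def bernSum (n : ℕ) (c : ℕ → ℝ) (s : Finset ℕ) (τ : ℝ) : ℝ :=
  ∑ i ∈ s, c i * τ ^ i * (1 - τ) ^ (n - i)

theorem hasDerivAt_pow_mul_one_sub_pow (i k : ℕ) {x : ℝ} (hx0 : x ≠ 0) (hx1 : x ≠ 1) :
    HasDerivAt (fun τ : ℝ => τ ^ i * (1 - τ) ^ k)
      ((i - (i + k) * x) * (x ^ i * (1 - x) ^ k) / (x * (1 - x))) x := by
  have hx1' : 1 - x ≠ 0 := sub_ne_zero.mpr (Ne.symm hx1)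
  refine ((hasDerivAt_pow i x).mul (((hasDerivAt_id' x).const_sub 1).fun_pow k)).congr_deriv ?_
  rw [eq_div_iff (mul_ne_zero hx0 hx1')]
  rcases i with _ | i <;> rcases k with _ | k <;>
    simp only [Nat.add_sub_cancel, Nat.cast_add, Nat.cast_one, Nat.cast_zero] <;> ring

theorem hasDerivAt_bernSum {n : ℕ} {s : Finset ℕ} (hs : ∀ i ∈ s, i ≤ n) (c : ℕ → ℝ) {x : ℝ}
    (hx0 : x ≠ 0) (hx1 : x ≠ 1) :
    HasDerivAt (bernSum n c s)
      ((bernSum n (fun i => i * c i) s x - n * x * bernSum n c s x) / (x * (1 - x))) x := by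
  have hterm : ∀ i ∈ s, HasDerivAt (fun τ : ℝ => c i * (τ ^ i * (1 - τ) ^ (n - i)))
      (c i * ((i - n * x) * (x ^ i * (1 - x) ^ (n - i)) / (x * (1 - x)))) x := fun i hi => by
    have h := hasDerivAt_pow_mul_one_sub_pow i (n - i) hx0 hx1
    rw [← Nat.cast_add, Nat.add_sub_cancel' (hs i hi)] at h
    exact h.const_mul (c i)
  have hfun : bernSum n c s = fun τ => ∑ i ∈ s, c i * (τ ^ i * (1 - τ) ^ (n - i)) := by
    funext τ
    simp only [bernSum, mul_assoc]
  rw [hfun]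
  refine (HasDerivAt.fun_sum hterm).congr_deriv ?_
  simp only [bernSum, Finset.mul_sum, ← Finset.sum_sub_distrib, Finset.sum_div]
  exact Finset.sum_congr rfl fun i _ => by ring

theorem hasDerivAt_bernSum_div {n : ℕ} {s : Finset ℕ} (hs : ∀ i ∈ s, i ≤ n) (c : ℕ → ℝ) {x : ℝ}
    (hx0 : x ≠ 0) (hx1 : x ≠ 1) (hS : bernSum n c s x ≠ 0) :
    HasDerivAt (fun τ => bernSum n (fun i => i * c i) s τ / bernSum n c s τ)
      ((bernSum n (fun i => i * (i * c i)) s x * bernSum n c s x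
          - bernSum n (fun i => i * c i) s x ^ 2) / (x * (1 - x) * bernSum n c s x ^ 2)) x := by
  have hx1' : 1 - x ≠ 0 := sub_ne_zero.mpr (Ne.symm hx1)
  refine ((hasDerivAt_bernSum hs _ hx0 hx1).div (hasDerivAt_bernSum hs c hx0 hx1) hS).congr_deriv ?_
  field_simp
  ring

theorem sq_sum_mul_lt_sum_sq_mul_mul_sum {ι : Type*} {s : Finset ι} {a w : ι → ℝ}
    (hw : ∀ k ∈ s, 0 ≤ w k) {i j : ι} (hi : i ∈ s) (hj : j ∈ s) (hij : a i ≠ a j)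
    (hwi : 0 < w i) (hwj : 0 < w j) :
    (∑ k ∈ s, a k * w k) ^ 2 < (∑ k ∈ s, a k ^ 2 * w k) * ∑ k ∈ s, w k := by
  have lagrange : ∑ p ∈ s ×ˢ s, w p.1 * w p.2 * (a p.1 - a p.2) ^ 2
      = 2 * ((∑ k ∈ s, a k ^ 2 * w k) * ∑ k ∈ s, w k - (∑ k ∈ s, a k * w k) ^ 2) := by
    have expand : ∀ k l, w k * w l * (a k - a l) ^ 2
        = a k ^ 2 * w k * w l - 2 * (a k * w k) * (a l * w l) + w k * (a l ^ 2 * w l) :=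
      fun k l => by ring
    simp only [Finset.sum_product, expand, Finset.sum_add_distrib, Finset.sum_sub_distrib,
      ← Finset.mul_sum, ← Finset.sum_mul]
    ring
  have hterm : 0 < w i * w j * (a i - a j) ^ 2 :=
    mul_pos (mul_pos hwi hwj) (sq_pos_of_ne_zero (sub_ne_zero.mpr hij))
  have hle : w i * w j * (a i - a j) ^ 2 ≤ ∑ p ∈ s ×ˢ s, w p.1 * w p.2 * (a p.1 - a p.2) ^ 2 :=
    Finset.single_le_sum (f := fun p : ι × ι => w p.1 * w p.2 * (a p.1 - a p.2) ^ 2)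
      (fun p hp => mul_nonneg (mul_nonneg (hw _ (Finset.mem_product.1 hp).1)
        (hw _ (Finset.mem_product.1 hp).2)) (sq_nonneg _))
      (Finset.mem_product.2 ⟨hi, hj⟩ : (i, j) ∈ s ×ˢ s)
  linarith

theorem exists_pos_hasDerivAt_H1 {N M : ℕ} (hM : 2 ≤ M) (hMN : M < N) {x : ℝ}
    (hx : x ∈ Ioo (0 : ℝ) 1) : ∃ d, 0 < d ∧ HasDerivAt (H1 N M) d x := by
  obtain ⟨hx0, hx1⟩ := hx
  set c : ℕ → ℝ := fun i => ((N - 1).choose i : ℝ)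
  set w : ℕ → ℝ := fun i => c i * x ^ i * (1 - x) ^ (N - 1 - i)
  have hs : ∀ i ∈ range M, i ≤ N - 1 := fun i hi => by rw [Finset.mem_range] at hi; omega
  have hw : ∀ i ∈ range M, 0 < w i := fun i hi =>
    mul_pos (mul_pos (Nat.cast_pos.2 (Nat.choose_pos (hs i hi))) (pow_pos hx0 i))
      (pow_pos (sub_pos.2 hx1) _)
  have hS0 : bernSum (N - 1) c (range M) x = ∑ i ∈ range M, w i := rfl
  have hS1 : bernSum (N - 1) (fun i => i * c i) (range M) x = ∑ i ∈ range M, (i : ℝ) * w i :=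
    Finset.sum_congr rfl fun i _ => by ring
  have hS2 : bernSum (N - 1) (fun i => i * (i * c i)) (range M) x
      = ∑ i ∈ range M, (i : ℝ) ^ 2 * w i :=
    Finset.sum_congr rfl fun i _ => by ring
  have h0 : 0 ∈ range M := Finset.mem_range.2 (by omega)
  have h1 : 1 ∈ range M := Finset.mem_range.2 (by omega)
  have hSpos : 0 < ∑ i ∈ range M, w i := Finset.sum_pos hw ⟨0, h0⟩
  refine ⟨_, ?_, hasDerivAt_bernSum_div hs c hx0.ne' hx1.ne (hS0 ▸ hSpos.ne')⟩
  rw [hS0, hS1, hS2]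
  have hvar := sq_sum_mul_lt_sum_sq_mul_mul_sum (a := fun i : ℕ => (i : ℝ))
    (fun i hi => (hw i hi).le) h0 h1
    (by norm_num) (hw 0 h0) (hw 1 h1)
  exact div_pos (sub_pos.2 hvar) (by have := sub_pos.2 hx1; positivity)

theorem H1_nonneg (N M : ℕ) {x : ℝ} (hx0 : 0 ≤ x) (hx1 : x ≤ 1) : 0 ≤ H1 N M x := by
  have h1x : 0 ≤ 1 - x := sub_nonneg.2 hx1
  exact div_nonneg (Finset.sum_nonneg fun i _ => by positivity)
    (Finset.sum_nonneg fun i _ => by positivity)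

noncomputable def Q (N D : ℕ) (x : ℝ) : ℝ := (N + D - 1 : ℝ) - D / (1 - (1 - x) ^ D) + x⁻¹

theorem H2_add_one_eq_mul_Q (N D : ℕ) {x : ℝ} (hx : x ≠ 0) : H2 N D x + 1 = x * Q N D x := by
  rw [H2, Q, mul_add, mul_inv_cancel₀ hx]

theorem g_eq_div_Q (N M D : ℕ) {x : ℝ} (hx : x ≠ 0) : g N M D x = (H1 N M x + 1) / Q N D x := by
  rw [g, H2_add_one_eq_mul_Q N D hx, mul_div_mul_left _ _ hx]

theorem one_sub_one_sub_pow_eq_mul_geom_sum (x : ℝ) (D : ℕ) :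
    1 - (1 - x) ^ D = x * ∑ k ∈ range D, (1 - x) ^ k := by
  rw [← geom_sum_mul_neg, sub_sub_cancel, mul_comm]

theorem nat_mul_pow_le_geom_sum {t : ℝ} (ht0 : 0 ≤ t) (ht1 : t ≤ 1) (D : ℕ) :
    D * t ^ D ≤ ∑ k ∈ range D, t ^ k :=
  calc (D : ℝ) * t ^ D = ∑ _k ∈ range D, t ^ D := by simp
    _ ≤ _ := Finset.sum_le_sum fun k hk => pow_le_pow_of_le_one ht0 ht1 (Finset.mem_range.1 hk).le

theorem sq_mul_pow_le_sq_geom_sum {t : ℝ} (ht : 0 ≤ t) (D : ℕ) :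
    D ^ 2 * t ^ (D - 1) ≤ (∑ k ∈ range D, t ^ k) ^ 2 := by
  -- Cauchy–Schwarz, pairing `t ^ k` with `t ^ (D - 1 - k)`
  have h := Finset.sum_sq_le_sum_mul_sum_of_sq_le_mul (range D) (r := fun _ => √(t ^ (D - 1)))
    (f := fun k => t ^ k) (g := fun k => t ^ (D - 1 - k)) (fun k _ => pow_nonneg ht k)
    (fun k _ => pow_nonneg ht _) fun k hk => by
      rw [Real.sq_sqrt (pow_nonneg ht _), ← pow_add, Nat.add_sub_cancel' (by
        rw [Finset.mem_range] at hk; omega)]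
  rw [Finset.sum_range_reflect (fun k => t ^ k)] at h
  simpa [mul_pow, Real.sq_sqrt (pow_nonneg ht _), ← sq] using h

theorem Q_pos {N D : ℕ} (hN : 1 < N) (hD : 1 ≤ D) {x : ℝ} (hx : x ∈ Ioo (0 : ℝ) 1) :
    0 < Q N D x := by
  obtain ⟨hx0, hx1⟩ := hx
  set P := ∑ k ∈ range D, (1 - x) ^ k
  have hu : 1 - (1 - x) ^ D = x * P := one_sub_one_sub_pow_eq_mul_geom_sum x D
  have hP : 0 < P := geom_sum_pos (sub_nonneg.2 hx1.le) (by omega)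
  have hDP := nat_mul_pow_le_geom_sum (sub_nonneg.2 hx1.le) (by linarith) D
  have hQ : Q N D x = (N - 1) + (P - D * (1 - x) ^ D) / (x * P) := by
    rw [Q, hu, show (1 - x) ^ D = 1 - x * P by linarith]
    field_simp
    ring
  have hN' : (1 : ℝ) < N := by exact_mod_cast hN
  rw [hQ]
  have := div_nonneg (sub_nonneg.2 hDP) (mul_pos hx0 hP).le
  linarith

theorem exists_nonpos_hasDerivAt_Q (N : ℕ) {D : ℕ} (hD : 1 ≤ D) {x : ℝ}
    (hx : x ∈ Ioo (0 : ℝ) 1) : ∃ d ≤ 0, HasDerivAt (Q N D) d x := by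
  obtain ⟨hx0, hx1⟩ := hx
  set P := ∑ k ∈ range D, (1 - x) ^ k
  have hu : 1 - (1 - x) ^ D = x * P := one_sub_one_sub_pow_eq_mul_geom_sum x D
  have hP : 0 < P := geom_sum_pos (sub_nonneg.2 hx1.le) (by omega)
  have hden : HasDerivAt (fun y => 1 - (1 - y) ^ D) (D * (1 - x) ^ (D - 1)) x := by
    simpa using (((hasDerivAt_id' x).const_sub 1).fun_pow D).const_sub 1
  have hderiv : HasDerivAt (Q N D) (D * (D * (1 - x) ^ (D - 1)) / (x * P) ^ 2 - (x ^ 2)⁻¹) x := by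
    refine ((((hasDerivAt_const x (D : ℝ)).div hden (hu ▸ (mul_pos hx0 hP).ne')).const_sub
      (N + D - 1 : ℝ)).add (hasDerivAt_inv hx0.ne')).congr_deriv ?_
    rw [hu]
    ring
  refine ⟨_, ?_, hderiv⟩
  have hinv : (x ^ 2)⁻¹ = P ^ 2 / (x * P) ^ 2 := by
    field_simp
  rw [sub_nonpos, hinv, ← mul_assoc, ← sq]
  exact div_le_div_of_nonneg_right (sq_mul_pow_le_sq_geom_sum (sub_nonneg.2 hx1.le) D)
    (sq_nonneg _)

theorem stmt17 (N M D : ℕ) (hM : 2 ≤ M) (hMN : M < N) (hD : 1 ≤ D) :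
    ∀ x ∈ Ioo (0:ℝ) 1, 0 < deriv (g N M D) x := by
  intro x hx
  obtain ⟨dH, hdH, hH⟩ := exists_pos_hasDerivAt_H1 hM hMN hx
  obtain ⟨dQ, hdQ, hQ⟩ := exists_nonpos_hasDerivAt_Q N hD hx
  have hQpos : 0 < Q N D x := Q_pos (by omega) hD hx
  have hg : (fun y => (H1 N M y + 1) / Q N D y) =ᶠ[nhds x] g N M D :=
    (eventually_ne_nhds hx.1.ne').mono fun y hy => (g_eq_div_Q N M D hy).symm
  rw [(((hH.add_const 1).div hQ hQpos.ne').congr_of_eventuallyEq hg.symm).deriv]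
  have hH1 : 0 ≤ H1 N M x + 1 := by linarith [H1_nonneg N M hx.1.le hx.2.le]
  have := mul_nonpos_of_nonneg_of_nonpos hH1 hdQ
  exact div_pos (by nlinarith) (pow_pos hQpos 2)
end
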